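/- arXiv:1112.3800 — 5 statements merged into one kernel-verified Lean document; each statement's English description precedes it below -/
import Mathlib

section
/- Let n, k be natural numbers and let f : ℝⁿ → ℝ be a k-regulous function. Then the zero set Z(f) = {x ∈ ℝⁿ : f(x) = 0} is Zariski constructible: there exist finitely many pairs of real polynomials (p₁, q₁), …, (p_m, q_m) in n variables such that Z(f) = ⋃ᵢ ({x : pᵢ(x) = 0} \ {x : qᵢ(x) = 0}). -/
/-!
Write `q * f = p` with `q ≠ 0` and pick a direction `v` on which the top homogeneous component
of `q` does not vanish. For every `x`, the restrictions `B(t) = q(x + t v)` and `A(t) = p(x + t v)`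
satisfy `B(t) f(x + t v) = A(t)`, and `B ≠ 0` because its coefficient of `t ^ deg q` is that
nonzero constant. If `a` is the order of `B` at `0`, continuity of `f` forces `t ^ a ∣ A` and
`A_a = B_a f(x)`, so `f(x) = 0 ↔ A_a = 0`. The coefficients `A_j`, `B_j` are polynomials in `x`,
hence `Z(f)` is the union over `a` of the sets `{B_0 = ⋯ = B_{a-1} = A_a = 0, B_a ≠ 0}`, and a
sum of squares turns each of them into a difference of two zero sets.
-/

open MvPolynomial

def IsRegulous (n k : ℕ) (f : (Fin n → ℝ) → ℝ) : Prop :=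
  ContDiff ℝ k f ∧ ∃ p q : MvPolynomial (Fin n) ℝ, q ≠ 0 ∧
    ∀ x : Fin n → ℝ, eval x q * f x = eval x p

open scoped Polynomial

namespace Polynomial

section Semiring

variable {R : Type*} [Semiring R]

theorem exists_eq_X_pow_natTrailingDegree_mul (B : R[X]) :
    ∃ g : R[X], B = X ^ B.natTrailingDegree * g ∧ g.coeff 0 = B.trailingCoeff := by
  obtain ⟨g, hg⟩ := (X_pow_dvd_iff (f := B)).mpr fun _ => coeff_eq_zero_of_lt_natTrailingDegree
  refine ⟨g, hg, ?_⟩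
  have := congrArg (coeff · B.natTrailingDegree) hg
  simpa [coeff_X_pow_mul', trailingCoeff] using this.symm

theorem natTrailingDegree_eq_iff {B : R[X]} (hB : B ≠ 0) {i : ℕ} :
    B.natTrailingDegree = i ↔ (∀ j < i, B.coeff j = 0) ∧ B.coeff i ≠ 0 := by
  constructor
  · rintro rfl
    exact ⟨fun j => coeff_eq_zero_of_lt_natTrailingDegree, mt trailingCoeff_eq_zero.mp hB⟩
  · rintro ⟨hlt, hi⟩
    exact (natTrailingDegree_le_of_ne_zero hi).antisymm (le_natTrailingDegree hB hlt)

end Semiring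

theorem coeff_prod_sum_of_natDegree_le {R ι : Type*} [CommSemiring R] (s : Finset ι)
    (f : ι → R[X]) (m : ι → ℕ) (h : ∀ i ∈ s, (f i).natDegree ≤ m i) :
    (∏ i ∈ s, f i).coeff (∑ i ∈ s, m i) = ∏ i ∈ s, (f i).coeff (m i) := by
  classical
  induction s using Finset.cons_induction with
  | empty => simp
  | cons a s ha ih =>
    have hs : ∀ i ∈ s, (f i).natDegree ≤ m i := fun i hi => h i (Finset.mem_cons_of_mem hi)
    rw [Finset.prod_cons, Finset.sum_cons, Finset.prod_cons, ← ih hs,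
      coeff_mul_add_eq_of_natDegree_le (h a (Finset.mem_cons_self a s))
        ((natDegree_prod_le _ _).trans (Finset.sum_le_sum hs))]

section NontriviallyNormedField

variable {𝕜 : Type*} [NontriviallyNormedField 𝕜]

theorem X_pow_dvd_of_eval_eq_pow_mul {φ : 𝕜 → 𝕜} (hφ : Continuous φ) :
    ∀ {a : ℕ} {A : 𝕜[X]}, (∀ t, A.eval t = t ^ a * φ t) → X ^ a ∣ A
  | 0, _, _ => by simp
  | a + 1, A, h => by
    obtain ⟨A', rfl⟩ : X ∣ A := X_dvd_iff.mpr (by simp [coeff_zero_eq_eval_zero, h])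
    have h' : ∀ t, A'.eval t = t ^ a * φ t := by
      refine congrFun (A'.continuous.ext_on (dense_compl_singleton 0) (by fun_prop) ?_)
      intro t (ht : t ≠ 0)
      have := h t
      rw [eval_mul, eval_X, pow_succ', mul_assoc] at this
      exact mul_left_cancel₀ ht this
    rw [pow_succ']
    exact mul_dvd_mul_left X (X_pow_dvd_of_eval_eq_pow_mul hφ h')

theorem coeff_natTrailingDegree_eq_trailingCoeff_mul {A B : 𝕜[X]} {F : 𝕜 → 𝕜}
    (hF : Continuous F) (h : ∀ t, B.eval t * F t = A.eval t) :
    A.coeff B.natTrailingDegree = B.trailingCoeff * F 0 := by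
  obtain ⟨g, hB, hg⟩ := exists_eq_X_pow_natTrailingDegree_mul B
  set a := B.natTrailingDegree
  have hA : ∀ t, A.eval t = t ^ a * (g.eval t * F t) := fun t => by
    rw [← h t, hB, eval_mul, eval_pow, eval_X, mul_assoc]
  obtain ⟨h', rfl⟩ := X_pow_dvd_of_eval_eq_pow_mul (g.continuous.mul hF) hA
  have h'0 : h'.eval 0 = g.eval 0 * F 0 := by
    refine congrFun (h'.continuous.ext_on (dense_compl_singleton 0) (g.continuous.mul hF) ?_) 0
    intro t (ht : t ≠ 0)
    have := hA t
    rw [eval_mul, eval_pow, eval_X] at this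
    exact mul_left_cancel₀ (pow_ne_zero a ht) this
  rw [coeff_X_pow_mul', if_pos le_rfl, Nat.sub_self, coeff_zero_eq_eval_zero, h'0, ← hg,
    coeff_zero_eq_eval_zero]

end NontriviallyNormedField

end Polynomial

namespace MvPolynomial

section CommSemiring

variable {σ R : Type*} [CommSemiring R]

/-- `p (x + t • v)`, as a polynomial in `t` whose coefficients are polynomials in `x`. -/
noncomputable def restrictToLines (v : σ → R) : MvPolynomial σ R →ₐ[R] (MvPolynomial σ R)[X] :=
  aeval fun i => Polynomial.C (X i) + Polynomial.C (C (v i)) * Polynomial.X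

variable (v : σ → R)

theorem restrictToLines_X (i : σ) :
    restrictToLines v (X i) = Polynomial.C (X i) + Polynomial.C (C (v i)) * Polynomial.X :=
  aeval_X _ i

theorem eval_map_restrictToLines (x : σ → R) (t : R) (p : MvPolynomial σ R) :
    ((restrictToLines v p).map (eval x)).eval t = eval (x + t • v) p := by
  induction p using MvPolynomial.induction_on with
  | C a => simp [restrictToLines]
  | add p q hp hq => simp [hp, hq]
  | mul_X p i hp =>
    simp only [map_mul, Polynomial.map_mul, Polynomial.eval_mul, hp, restrictToLines_X,
      Polynomial.map_add, Polynomial.map_C, Polynomial.map_X, Polynomial.eval_add,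
      Polynomial.eval_C, Polynomial.eval_X, eval_X, eval_C, Pi.add_apply, Pi.smul_apply,
      smul_eq_mul, mul_comm (v i)]

theorem natDegree_restrictToLines_X_le (i : σ) : (restrictToLines v (X i)).natDegree ≤ 1 := by
  rw [restrictToLines_X]
  exact (Polynomial.natDegree_add_le _ _).trans
    (max_le (by simp) ((Polynomial.natDegree_C_mul_le _ _).trans Polynomial.natDegree_X_le))

theorem coeff_restrictToLines_X_one (i : σ) : (restrictToLines v (X i)).coeff 1 = C (v i) := by
  simp [restrictToLines_X, Polynomial.coeff_C]

theorem restrictToLines_monomial (α : σ →₀ ℕ) (c : R) :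
    restrictToLines v (monomial α c) =
      Polynomial.C (C c) * ∏ i ∈ α.support, restrictToLines v (X i) ^ α i := by
  rw [monomial_eq, map_mul, Finsupp.prod, map_prod]
  simp [restrictToLines, Polynomial.algebraMap_apply, algebraMap_eq]

theorem natDegree_restrictToLines_X_pow_le (i : σ) (k : ℕ) :
    (restrictToLines v (X i) ^ k).natDegree ≤ k :=
  Polynomial.natDegree_pow_le_of_le k (natDegree_restrictToLines_X_le v i) |>.trans (by simp)

theorem natDegree_restrictToLines_monomial_le (α : σ →₀ ℕ) (c : R) :
    (restrictToLines v (monomial α c)).natDegree ≤ α.degree := by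
  rw [restrictToLines_monomial]
  refine Polynomial.natDegree_C_mul_le _ _ |>.trans <| (Polynomial.natDegree_prod_le _ _).trans ?_
  exact Finset.sum_le_sum fun i _ => natDegree_restrictToLines_X_pow_le v i (α i)

theorem coeff_restrictToLines_monomial_degree (α : σ →₀ ℕ) (c : R) :
    (restrictToLines v (monomial α c)).coeff α.degree = C (eval v (monomial α c)) := by
  rw [restrictToLines_monomial, Polynomial.coeff_C_mul, Finsupp.degree_apply,
    Polynomial.coeff_prod_sum_of_natDegree_le _ _ _
      fun i _ => natDegree_restrictToLines_X_pow_le v i (α i)]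
  have hpow : ∀ i ∈ α.support, (restrictToLines v (X i) ^ α i).coeff (α i) = C (v i ^ α i) :=
    fun i _ => by
      have := Polynomial.coeff_pow_of_natDegree_le (natDegree_restrictToLines_X_le v i) (m := α i)
      rw [mul_one, coeff_restrictToLines_X_one] at this
      rw [this, map_pow]
  rw [Finset.prod_congr rfl hpow, ← map_prod, ← map_mul, eval_monomial, Finsupp.prod]

theorem coeff_restrictToLines_totalDegree (p : MvPolynomial σ R) :
    (restrictToLines v p).coeff p.totalDegree =
      C (eval v (homogeneousComponent p.totalDegree p)) := by
  classical
  conv_lhs => arg 1; rw [p.as_sum]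
  rw [map_sum, Polynomial.finsetSum_coeff, homogeneousComponent_apply, map_sum, map_sum,
    Finset.sum_filter]
  refine Finset.sum_congr rfl fun α hα => ?_
  split_ifs with hdeg
  · rw [← hdeg, coeff_restrictToLines_monomial_degree]
  · refine Polynomial.coeff_eq_zero_of_natDegree_lt
      ((natDegree_restrictToLines_monomial_le v α _).trans_lt ?_)
    exact (le_totalDegree hα : α.degree ≤ _).lt_of_ne hdeg

theorem homogeneousComponent_totalDegree_ne_zero {p : MvPolynomial σ R} (hp : p ≠ 0) :
    homogeneousComponent p.totalDegree p ≠ 0 := by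
  classical
  obtain ⟨α, hα, hdeg⟩ := Finset.exists_mem_eq_sup p.support (support_nonempty.mpr hp)
    fun α => α.sum fun _ e => e
  rw [← support_nonempty, support_homogeneousComponent]
  exact ⟨α, Finset.mem_filter.mpr ⟨hα, hdeg.symm⟩⟩

end CommSemiring

theorem exists_eval_homogeneousComponent_totalDegree_ne_zero {σ R : Type*} [CommRing R]
    [IsDomain R] [Infinite R] {p : MvPolynomial σ R} (hp : p ≠ 0) :
    ∃ v : σ → R, eval v (homogeneousComponent p.totalDegree p) ≠ 0 := by
  by_contra! h
  exact homogeneousComponent_totalDegree_ne_zero hp (MvPolynomial.funext fun x => by simp [h x])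

theorem map_eval_restrictToLines_ne_zero {σ R : Type*} [CommSemiring R] {v : σ → R}
    {p : MvPolynomial σ R} (hv : eval v (homogeneousComponent p.totalDegree p) ≠ 0)
    (x : σ → R) : (restrictToLines v p).map (eval x) ≠ 0 := by
  intro h
  have := congrArg (Polynomial.coeff · p.totalDegree) h
  simp only [Polynomial.coeff_map, coeff_restrictToLines_totalDegree, eval_C,
    Polynomial.coeff_zero] at this
  exact hv this

theorem eq_zero_iff_coeff_restrictToLines_eq_zero {σ 𝕜 : Type*} [NontriviallyNormedField 𝕜]
    {f : (σ → 𝕜) → 𝕜} (hf : Continuous f) {p q : MvPolynomial σ 𝕜}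
    (hpq : ∀ x, eval x q * f x = eval x p) {v : σ → 𝕜}
    (hv : eval v (homogeneousComponent q.totalDegree q) ≠ 0) (x : σ → 𝕜) :
    f x = 0 ↔ ((restrictToLines v p).map (eval x)).coeff
      ((restrictToLines v q).map (eval x)).natTrailingDegree = 0 := by
  rw [Polynomial.coeff_natTrailingDegree_eq_trailingCoeff_mul (F := fun t => f (x + t • v))
    (by fun_prop) fun t => by simp only [eval_map_restrictToLines, hpq]]
  simp [map_eval_restrictToLines_ne_zero hv x]

theorem natTrailingDegree_map_eval_eq_and_coeff_eq_zero_iff {σ R : Type*} [CommRing R]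
    [LinearOrder R] [IsStrictOrderedRing R] {Q P : (MvPolynomial σ R)[X]} {x : σ → R}
    (hQ : Q.map (eval x) ≠ 0) (i : ℕ) :
    (Q.map (eval x)).natTrailingDegree = i ∧ (P.map (eval x)).coeff i = 0 ↔
      eval x (∑ j ∈ Finset.range i, Q.coeff j ^ 2 + P.coeff i ^ 2) = 0 ∧
        eval x (Q.coeff i) ≠ 0 := by
  rw [Polynomial.natTrailingDegree_eq_iff hQ]
  simp only [Polynomial.coeff_map, map_add, map_sum, map_pow]
  rw [add_eq_zero_iff_of_nonneg (Finset.sum_nonneg fun _ _ => sq_nonneg _) (sq_nonneg _),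
    Finset.sum_eq_zero_iff_of_nonneg fun _ _ => sq_nonneg _]
  simp only [Finset.mem_range, pow_eq_zero_iff two_ne_zero]
  tauto

end MvPolynomial

/-- **Regulous functions, Corollaire `coregfermeestconstructible`**: the zero set of a
`k`-regulous function on `ℝⁿ` is Zariski constructible, i.e. a finite union of differences
of real polynomial zero sets. -/
theorem zero_set_regulous_constructible (n k : ℕ) (f : (Fin n → ℝ) → ℝ)
    (hf : IsRegulous n k f) :
    ∃ (m : ℕ) (p q : Fin m → MvPolynomial (Fin n) ℝ),
      {x : Fin n → ℝ | f x = 0} =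
        ⋃ i : Fin m, ({x : Fin n → ℝ | eval x (p i) = 0} \ {x : Fin n → ℝ | eval x (q i) = 0}) := by
  obtain ⟨hCk, p, q, hq, hpq⟩ := hf
  obtain ⟨v, hv⟩ := exists_eval_homogeneousComponent_totalDegree_ne_zero hq
  set Q := restrictToLines v q
  set P := restrictToLines v p
  refine ⟨Q.natDegree + 1, fun i => ∑ j ∈ Finset.range i, Q.coeff j ^ 2 + P.coeff i ^ 2,
    fun i => Q.coeff i, ?_⟩
  ext x
  have hQx : Q.map (eval x) ≠ 0 := map_eval_restrictToLines_ne_zero hv x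
  simp only [Set.mem_ofPred_eq, Set.mem_iUnion, Set.mem_sdiff,
    eq_zero_iff_coeff_restrictToLines_eq_zero hCk.continuous hpq hv x,
    ← natTrailingDegree_map_eval_eq_and_coeff_eq_zero_iff hQx]
  constructor
  · intro h
    have hle : (Q.map (eval x)).natTrailingDegree ≤ Q.natDegree :=
      (Polynomial.natTrailingDegree_le_natDegree _).trans Polynomial.natDegree_map_le
    exact ⟨⟨_, Nat.lt_succ_of_le hle⟩, rfl, h⟩
  · rintro ⟨i, hi, h⟩
    exact hi ▸ h
end

section
/- Let ℓ, m, n, k be natural numbers. Let f : ℝⁿ → ℝᵐ be a map each of whose m coordinate functions is k-regulous, and let g : ℝᵐ → ℝˡ be a map each of whose ℓ coordinate functions is k-regulous. Then each coordinate function of the composition g ∘ f : ℝⁿ → ℝˡ is k-regulous. -/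
/-!
Write `g = p / q` and give the coordinates of `f` a common denominator `Q`. Composing naively
fails, since `f` may map into the zero set of `q`. Instead move along the lines
`t ↦ f x + t v` with `v := w - f x₀`, where `q w ≠ 0` and `Q x₀ ≠ 0`. Clearing
denominators in `q * g = p` along these lines gives polynomials `S, R` in `(x, t)` with
`S(x, t) * g (f x + t v) = R(x, t)`, and `S ≠ 0` because `S(x₀, 1) = Q(x₀) ^ N * q(w)`.
If `a` is the order of `S` in `t`, dividing by `t ^ a` and letting `t → 0`, which uses the
continuity of `g`, gives `Sₐ(x) * g (f x) = Rₐ(x)` for the coefficients of `t ^ a`.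
-/

open MvPolynomial

namespace Polynomial

open Filter Topology

variable {P Q : ℝ[X]} {g : ℝ → ℝ}

lemma eval_divX_mul_eq_of_eval_mul_eq (hg : ContinuousAt g 0) (hQ : Q.coeff 0 = 0)
    (h : ∀ t, Q.eval t * g t = P.eval t) (t : ℝ) : Q.divX.eval t * g t = P.divX.eval t := by
  have hP : P.coeff 0 = 0 := by
    rw [coeff_zero_eq_eval_zero] at hQ ⊢
    simpa [hQ] using (h 0).symm
  have eval_eq : ∀ R : ℝ[X], R.coeff 0 = 0 → ∀ s, R.eval s = R.divX.eval s * s := by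
    intro R hR s
    conv_lhs => rw [← divX_mul_X_add R]
    simp [hR]
  have off_zero : ∀ s ≠ 0, Q.divX.eval s * g s = P.divX.eval s := fun s hs =>
    mul_right_cancel₀ hs (by rw [mul_right_comm, ← eval_eq Q hQ, ← eval_eq P hP, h])
  have near_zero : (fun s => Q.divX.eval s * g s) =ᶠ[𝓝 0] fun s => P.divX.eval s :=
    ((Q.divX.continuousAt.mul hg).eventuallyEq_nhds_iff_eventuallyEq_nhdsNE
      P.divX.continuousAt).mp (eventually_nhdsWithin_of_forall off_zero)
  rcases eq_or_ne t 0 with rfl | ht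
  · exact near_zero.eq_of_nhds
  · exact off_zero t ht

lemma coeff_mul_eq_of_forall_eval_mul_eq (hg : ContinuousAt g 0)
    (h : ∀ t, Q.eval t * g t = P.eval t) {a : ℕ} (hQ : ∀ j < a, Q.coeff j = 0) :
    Q.coeff a * g 0 = P.coeff a := by
  induction a generalizing P Q with
  | zero => simpa [coeff_zero_eq_eval_zero] using h 0
  | succ a ih =>
    simpa [coeff_divX] using ih (eval_divX_mul_eq_of_eval_mul_eq hg (hQ 0 a.succ_pos) h)
      fun j hj => by simpa [coeff_divX] using hQ (j + 1) (by omega)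

end Polynomial

lemma Subalgebra.exists_pow_mul_aeval_mem {R B σ : Type*} [CommSemiring R] [CommSemiring B]
    [Algebra R B] (A : Subalgebra R B) {c : B} (hc : c ∈ A) {y : σ → B}
    (hy : ∀ j, c * y j ∈ A) (r : MvPolynomial σ R) : ∃ N, c ^ N * aeval y r ∈ A := by
  induction r using MvPolynomial.induction_on with
  | C a => exact ⟨0, by simp⟩
  | add p q hp hq =>
    obtain ⟨Np, hNp⟩ := hp
    obtain ⟨Nq, hNq⟩ := hq
    refine ⟨Np + Nq, ?_⟩
    have : c ^ (Np + Nq) * aeval y (p + q) =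
        c ^ Nq * (c ^ Np * aeval y p) + c ^ Np * (c ^ Nq * aeval y q) := by
      rw [map_add, pow_add]; ring
    rw [this]
    exact add_mem (mul_mem (pow_mem hc _) hNp) (mul_mem (pow_mem hc _) hNq)
  | mul_X p j hp =>
    obtain ⟨N, hN⟩ := hp
    refine ⟨N + 1, ?_⟩
    have : c ^ (N + 1) * aeval y (p * X j) = (c ^ N * aeval y p) * (c * y j) := by
      rw [map_mul, aeval_X, pow_succ]; ring
    rw [this]
    exact mul_mem hN (hy j)

variable {σ : Type*}

namespace MvPolynomial

lemma exists_eval_ne_zero {p : MvPolynomial σ ℝ} (hp : p ≠ 0) : ∃ x, eval x p ≠ 0 := by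
  by_contra! h
  exact hp (MvPolynomial.funext fun x => by simp [h x])

lemma aeval_pi_apply {X : Type*} (y : σ → X → ℝ) (r : MvPolynomial σ ℝ) (x : X) :
    aeval y r x = eval (fun j => y j x) r := by
  rw [← coe_aeval_eq_eval]
  exact comp_aeval_apply y (Pi.evalAlgHom ℝ (fun _ => ℝ) x) r

noncomputable def polynomialEvalAlgHom (σ : Type*) :
    Polynomial (MvPolynomial σ ℝ) →ₐ[ℝ] ((σ → ℝ) × ℝ → ℝ) :=
  AlgHom.pi fun xt => (Polynomial.aeval xt.2).comp (Polynomial.mapAlgHom (aeval xt.1))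

@[simp]
lemma polynomialEvalAlgHom_apply (R : Polynomial (MvPolynomial σ ℝ)) (x : σ → ℝ) (t : ℝ) :
    polynomialEvalAlgHom σ R (x, t) = (R.map (eval x)).eval t := by
  simp [polynomialEvalAlgHom, Polynomial.eval_map, coe_aeval_eq_eval]

end MvPolynomial

def IsRationalFunction (f : (σ → ℝ) → ℝ) : Prop :=
  ∃ p q : MvPolynomial σ ℝ, q ≠ 0 ∧ ∀ x, eval x q * f x = eval x p

namespace IsRationalFunction

lemma exists_common_denominator {ι : Type*} [Fintype ι] {f : (σ → ℝ) → ι → ℝ}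
    (hf : ∀ j, IsRationalFunction fun x => f x j) :
    ∃ Q : MvPolynomial σ ℝ, Q ≠ 0 ∧
      ∃ P : ι → MvPolynomial σ ℝ, ∀ x j, eval x Q * f x j = eval x (P j) := by
  classical
  choose p q hq hpq using hf
  refine ⟨∏ j, q j, Finset.prod_ne_zero_iff.mpr fun j _ => hq j,
    fun j => p j * ∏ i ∈ Finset.univ.erase j, q i, fun x j => ?_⟩
  rw [← Finset.mul_prod_erase _ q (Finset.mem_univ j), map_mul, map_mul, ← hpq]
  ring

lemma of_forall_eval_mul_eq {R S : Polynomial (MvPolynomial σ ℝ)} (hS : S ≠ 0)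
    {G : (σ → ℝ) → ℝ → ℝ} (hG : ∀ x, ContinuousAt (G x) 0)
    (h : ∀ x t, polynomialEvalAlgHom σ S (x, t) * G x t = polynomialEvalAlgHom σ R (x, t)) :
    IsRationalFunction fun x => G x 0 := by
  set a := S.natTrailingDegree
  refine ⟨R.coeff a, S.coeff a, mt Polynomial.trailingCoeff_eq_zero.mp hS, fun x => ?_⟩
  have := Polynomial.coeff_mul_eq_of_forall_eval_mul_eq (hG x) (fun t => by simpa using h x t)
    (a := a) fun j hj => by
      rw [Polynomial.coeff_map, Polynomial.coeff_eq_zero_of_lt_natTrailingDegree hj, map_zero]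
  simpa only [Polynomial.coeff_map] using this

theorem comp {ι : Type*} [Fintype ι] {f : (σ → ℝ) → ι → ℝ}
    {g : (ι → ℝ) → ℝ} (hg : IsRationalFunction g) (hgc : Continuous g)
    (hf : ∀ j, IsRationalFunction fun x => f x j) : IsRationalFunction fun x => g (f x) := by
  obtain ⟨p, q, hq, hpq⟩ := hg
  obtain ⟨Q, hQ, P, hP⟩ := exists_common_denominator hf
  obtain ⟨x₀, hx₀⟩ := exists_eval_ne_zero hQ
  obtain ⟨w, hw⟩ := exists_eval_ne_zero hq
  set v := w - f x₀
  let y : ι → (σ → ℝ) × ℝ → ℝ := fun j xt => f xt.1 j + xt.2 * v j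
  set c := polynomialEvalAlgHom σ (.C Q)
  have hc : c ∈ (polynomialEvalAlgHom σ).range := ⟨_, rfl⟩
  have hy : ∀ j, c * y j ∈ (polynomialEvalAlgHom σ).range := fun j =>
    ⟨.C (P j) + .C (C (v j) * Q) * .X, by ext ⟨x, t⟩; simp [c, y, ← hP]; ring⟩
  obtain ⟨Np, hNp⟩ := (polynomialEvalAlgHom σ).range.exists_pow_mul_aeval_mem hc hy p
  obtain ⟨Nq, hNq⟩ := (polynomialEvalAlgHom σ).range.exists_pow_mul_aeval_mem hc hy q
  set N := Np + Nq
  obtain ⟨R, hR⟩ := (polynomialEvalAlgHom σ).mem_range.mp <|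
    show c ^ N * aeval y p ∈ (polynomialEvalAlgHom σ).range by
      rw [pow_add, mul_comm (c ^ Np), mul_assoc]; exact mul_mem (pow_mem hc _) hNp
  obtain ⟨S, hS⟩ := (polynomialEvalAlgHom σ).mem_range.mp <|
    show c ^ N * aeval y q ∈ (polynomialEvalAlgHom σ).range by
      rw [pow_add, mul_assoc]; exact mul_mem (pow_mem hc _) hNq
  have eval_R : ∀ x t, polynomialEvalAlgHom σ R (x, t) =
      eval x Q ^ N * eval (fun j => f x j + t * v j) p := by
    intro x t; rw [hR]; simp [c, aeval_pi_apply, y]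
  have eval_S : ∀ x t, polynomialEvalAlgHom σ S (x, t) =
      eval x Q ^ N * eval (fun j => f x j + t * v j) q := by
    intro x t; rw [hS]; simp [c, aeval_pi_apply, y]
  have hS0 : S ≠ 0 := by
    rintro rfl
    have hline : (fun j => f x₀ j + 1 * v j) = w := by ext j; simp [v]
    have h0 := eval_S x₀ 1
    rw [hline, map_zero, Pi.zero_apply] at h0
    exact mul_ne_zero (pow_ne_zero _ hx₀) hw h0.symm
  simpa using of_forall_eval_mul_eq (G := fun x t => g fun j => f x j + t * v j) hS0
    (fun x => by fun_prop) fun x t => by rw [eval_R, eval_S, mul_assoc, hpq]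

end IsRationalFunction

/-- **Regulous functions, Corollaire `cor.compositionregulues`**: the composition of two
`k`-regulous maps (maps all of whose coordinate functions are `k`-regulous) is again
`k`-regulous. -/
theorem comp_regulous (l m n k : ℕ)
    (f : (Fin n → ℝ) → (Fin m → ℝ)) (g : (Fin m → ℝ) → (Fin l → ℝ))
    (hf : ∀ j : Fin m, IsRegulous n k (fun x => f x j))
    (hg : ∀ i : Fin l, IsRegulous m k (fun y => g y i)) :
    ∀ i : Fin l, IsRegulous n k (fun x => g (f x) i) := fun i =>
  ⟨(hg i).1.comp (contDiff_pi.mpr fun j => (hf j).1),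
    IsRationalFunction.comp (hg i).2 (hg i).1.continuous fun j => (hf j).2⟩
end

section
/- Let n, k be natural numbers and let I be a radical ideal of the ring R^k(ℝⁿ) of k-regulous functions on ℝⁿ. Then I is a real ideal: whenever f₁, …, f_m ∈ R^k(ℝⁿ) satisfy f₁² + ⋯ + f_m² ∈ I, one has f_i ∈ I for every i = 1, …, m. -/
open MvPolynomial

/-- The ring `R^k(ℝⁿ)` of `k`-regulous functions, as a subring of the ring of all
functions `ℝⁿ → ℝ` with pointwise operations. -/
def regulousRing (n k : ℕ) : Subring ((Fin n → ℝ) → ℝ) where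
  carrier := {f | IsRegulous n k f}
  one_mem' := ⟨contDiff_const, 1, 1, one_ne_zero, by simp⟩
  zero_mem' := ⟨contDiff_const, 0, 1, one_ne_zero, by simp⟩
  mul_mem' := by
    rintro f g ⟨hf, p₁, q₁, hq₁, h₁⟩ ⟨hg, p₂, q₂, hq₂, h₂⟩
    refine ⟨hf.mul hg, p₁ * p₂, q₁ * q₂, mul_ne_zero hq₁ hq₂, fun x => ?_⟩
    simp only [eval_mul, Pi.mul_apply]
    linear_combination (eval x q₂ * g x) * h₁ x + eval x p₁ * h₂ x
  add_mem' := by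
    rintro f g ⟨hf, p₁, q₁, hq₁, h₁⟩ ⟨hg, p₂, q₂, hq₂, h₂⟩
    refine ⟨hf.add hg, p₁ * q₂ + p₂ * q₁, q₁ * q₂, mul_ne_zero hq₁ hq₂, fun x => ?_⟩
    simp only [eval_mul, eval_add, Pi.add_apply]
    linear_combination (eval x q₂) * h₁ x + (eval x q₁) * h₂ x
  neg_mem' := by
    rintro f ⟨hf, p, q, hq, h⟩
    refine ⟨hf.neg, -p, q, hq, fun x => ?_⟩
    simp only [map_neg, Pi.neg_apply]
    linear_combination -(h x)

/-!
Put `s = f₁² + ⋯ + f_m²`, so that `fᵢ² ≤ s`. Then `|fᵢᴺ / s| ≤ |fᵢ|^(N-2)`, and differentiating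
`fᵢᴺ / s` repeatedly only produces terms `fᵢ^(N-j) / s^(1+j) · (smooth)`, which stay bounded by a
positive power of `|fᵢ|` as long as `N ≥ 3k + 3`; so `h = fᵢᴺ / s` (extended by zero) is `C^k`.
It is rational because `fᵢ` and `s` are, hence `fᵢᴺ = h s ∈ I` and `fᵢ ∈ √I = I`.
-/

open MvPolynomial Asymptotics Filter Topology ContinuousLinearMap

universe u

theorem MvPolynomial.dense_setOf_eval_ne_zero {𝕜 σ : Type*} [RCLike 𝕜] [Fintype σ]
    {q : MvPolynomial σ 𝕜} (hq : q ≠ 0) : Dense {x : σ → 𝕜 | eval x q ≠ 0} := by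
  refine interior_eq_empty_iff_dense_compl.1 (Set.eq_empty_iff_forall_notMem.2 fun x hx => hq ?_)
  have hzero : (eval · q) =ᶠ[𝓝 x] 0 := mem_interior_iff_mem_nhds.1 hx
  refine MvPolynomial.funext fun y => ?_
  simpa using (AnalyticOnNhd.eval_mvPolynomial q).eqOn_zero_of_preconnected_of_eventuallyEq_zero
    (convex_univ (𝕜 := ℝ)).isPreconnected (Set.mem_univ x) hzero (Set.mem_univ y)

theorem MvPolynomial.eq_zero_of_eval_mul_eq_zero {𝕜 σ : Type*} [RCLike 𝕜] [Fintype σ]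
    {q : MvPolynomial σ 𝕜} (hq : q ≠ 0) {s : (σ → 𝕜) → 𝕜} (hs : Continuous s)
    (h : ∀ x, eval x q * s x = 0) : s = 0 :=
  hs.ext_on (dense_setOf_eval_ne_zero hq) continuous_const fun x hx =>
    (mul_eq_zero.1 (h x)).resolve_left hx

theorem abs_pow_div_pow_le {a t : ℝ} (h : a ^ 2 ≤ t) {N b : ℕ} (hb : 2 * b ≤ N) :
    |a ^ N / t ^ b| ≤ |a| ^ (N - 2 * b) := by
  have ht : 0 ≤ t := (sq_nonneg a).trans h
  rw [abs_div, abs_pow, abs_of_nonneg (pow_nonneg ht b)]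
  refine div_le_of_le_mul₀ (pow_nonneg ht b) (by positivity) ?_
  calc |a| ^ N = |a| ^ (N - 2 * b) * (a ^ 2) ^ b := by
        rw [← sq_abs, ← pow_mul, ← pow_add, Nat.sub_add_cancel hb]
    _ ≤ |a| ^ (N - 2 * b) * t ^ b := by gcongr

section PowDivPow

variable {E W : Type*} [NormedAddCommGroup E] [NormedAddCommGroup W] [NormedSpace ℝ W]
  {f s : E → ℝ}

/- Junk division `t / 0 = 0` makes `(f x ^ N / s x ^ b) • g x` (for `b ≥ 1`) the extension by zero
across the zero set of `s`, on which `f` vanishes as well. -/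

theorem continuous_pow_div_pow_smul (hf : Continuous f) (hs : Continuous s)
    (hfs : ∀ x, f x ^ 2 ≤ s x) {g : E → W} (hg : Continuous g) {N b : ℕ} (hN : 2 * b < N) :
    Continuous fun x => (f x ^ N / s x ^ b) • g x := by
  refine continuous_iff_continuousAt.2 fun x => ?_
  by_cases hx : s x = 0
  · have hfx : f x = 0 := (sq_nonpos_iff _).1 (hx ▸ hfs x)
    have hbound (y : E) : ‖(f y ^ N / s y ^ b) • g y‖ ≤ |f y| ^ (N - 2 * b) * ‖g y‖ := by
      rw [norm_smul]
      exact mul_le_mul_of_nonneg_right (abs_pow_div_pow_le (hfs y) hN.le) (norm_nonneg _)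
    have hlim : Tendsto (fun y => |f y| ^ (N - 2 * b) * ‖g y‖) (𝓝 x) (𝓝 0) := by
      simpa [hfx, Nat.sub_ne_zero_of_lt hN] using
        ((hf.tendsto x).abs.pow (N - 2 * b)).mul (hg.tendsto x).norm
    rw [ContinuousAt, hfx, zero_pow (by omega), zero_div, zero_smul]
    exact squeeze_zero_norm hbound hlim
  · exact ((hf.continuousAt.pow N).div (hs.continuousAt.pow b) (pow_ne_zero b hx)).smul
      hg.continuousAt

variable [NormedSpace ℝ E]

theorem hasFDerivAt_sq_smul_of_eq_zero {φ : E → ℝ} {R : E → W} {x : E}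
    (hφ : DifferentiableAt ℝ φ x) (hφx : φ x = 0) (hR : ContinuousAt R x) :
    HasFDerivAt (fun y => φ y ^ 2 • R y) (0 : E →L[ℝ] W) x := by
  have hO : φ =O[𝓝 x] fun y => ‖y - x‖ := by
    simpa [hφx] using hφ.hasFDerivAt.isBigO_sub.norm_right
  have ho : (fun y => φ y • R y) =o[𝓝 x] fun _ => (1 : ℝ) := by
    refine (isLittleO_one_iff ℝ).2 ?_
    simpa [hφx] using hφ.continuousAt.tendsto.smul hR.tendsto
  have h := hO.smul_isLittleO ho
  simp only [smul_smul, ← sq, smul_eq_mul, mul_one] at h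
  refine HasFDerivAt.of_isLittleO ?_
  simpa [hφx] using h.trans_isBigO (isBigO_refl (fun y => y - x) _).norm_left

theorem hasFDerivAt_pow_div_pow_smul (hf : Differentiable ℝ f) (hs : Differentiable ℝ s)
    (hfs : ∀ x, f x ^ 2 ≤ s x) {g : E → W} (hg : Differentiable ℝ g) {M b : ℕ}
    (hM : 2 * b + 4 ≤ M) (x : E) :
    HasFDerivAt (fun y => (f y ^ (M + 1) / s y ^ (b + 1)) • g y)
      ((f x ^ M / s x ^ (b + 2)) •
        ((f x * s x) • fderiv ℝ g x + ((M + 1 : ℝ) * s x) • (fderiv ℝ f x).smulRight (g x)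
          - ((b + 1 : ℝ) * f x) • (fderiv ℝ s x).smulRight (g x))) x := by
  by_cases hx : s x = 0
  · have hfx : f x = 0 := (sq_nonpos_iff _).1 (hx ▸ hfs x)
    have hsplit : (fun y => (f y ^ (M + 1) / s y ^ (b + 1)) • g y) =
        fun y => f y ^ 2 • ((f y ^ (M - 1) / s y ^ (b + 1)) • g y) := by
      ext y
      rw [smul_smul, ← mul_div_assoc, ← pow_add, show 2 + (M - 1) = M + 1 by omega]
    rw [hx, zero_pow (by omega), div_zero, zero_smul, hsplit]
    exact hasFDerivAt_sq_smul_of_eq_zero (hf x) hfx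
      ((continuous_pow_div_pow_smul hf.continuous hs.continuous hfs hg.continuous
        (by omega)).continuousAt)
  · have hc := ((hf x).hasFDerivAt.pow (M + 1)).mul
      ((hasDerivAt_inv (pow_ne_zero (b + 1) hx)).comp_hasFDerivAt x
        ((hs x).hasFDerivAt.pow (b + 1)))
    convert hc.smul (hg x).hasFDerivAt using 1
    · simp only [div_eq_mul_inv]
      rfl
    · ext v
      simp only [smul_apply, sub_apply, add_apply, smulRight_apply, Pi.mul_apply,
        Function.comp_apply, add_tsub_cancel_right, nsmul_eq_mul, Nat.cast_add, Nat.cast_one,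
        neg_smul, smul_neg, neg_apply, smul_eq_mul]
      match_scalars <;> field_simp <;> ring

end PowDivPow

/- `E` and `W` share a universe because the induction replaces `g` by a map into `E →L[ℝ] W`. -/
theorem contDiff_pow_div_pow_smul {E W : Type u} [NormedAddCommGroup E] [NormedSpace ℝ E]
    [NormedAddCommGroup W] [NormedSpace ℝ W] {f s : E → ℝ} {k : ℕ} (hf : ContDiff ℝ k f)
    (hs : ContDiff ℝ k s) (hfs : ∀ x, f x ^ 2 ≤ s x) {j : ℕ} (hj : j ≤ k) {g : E → W}
    (hg : ContDiff ℝ j g) {N b : ℕ} (hN : 2 * b + 3 * j + 1 ≤ N) :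
    ContDiff ℝ j fun x => (f x ^ N / s x ^ b) • g x := by
  induction j generalizing W N b with
  | zero =>
    simpa using continuous_pow_div_pow_smul hf.continuous hs.continuous hfs hg.continuous
      (by omega)
  | succ j ih =>
    have hfj : ContDiff ℝ (j + 1) f := hf.of_le (by exact_mod_cast hj)
    have hsj : ContDiff ℝ (j + 1) s := hs.of_le (by exact_mod_cast hj)
    obtain ⟨M, rfl⟩ : ∃ M, N = M + 1 := ⟨N - 1, by omega⟩
    rcases b with _ | b
    · simp only [pow_zero, div_one]
      exact (hfj.pow (M + 1)).smul hg
    have hderiv := hasFDerivAt_pow_div_pow_smul (hfj.differentiable (by simp))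
      (hsj.differentiable (by simp)) hfs (hg.differentiable (by simp)) (M := M) (b := b)
      (by omega)
    push_cast at hg ⊢
    refine contDiff_succ_iff_fderiv.2 ⟨fun x => (hderiv x).differentiableAt, by simp, ?_⟩
    rw [funext fun x => (hderiv x).fderiv]
    refine ih (by omega) ?_ (b := b + 2) (by omega)
    have hf' := hfj.fderiv_right le_rfl
    have hs' := hsj.fderiv_right le_rfl
    have hg' := hg.fderiv_right le_rfl
    have hg0 : ContDiff ℝ j g := hg.of_le le_self_add
    have hf0 : ContDiff ℝ j f := hfj.of_le le_self_add
    have hs0 : ContDiff ℝ j s := hsj.of_le le_self_add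
    exact (((hf0.mul hs0).smul hg').add ((contDiff_const.mul hs0).smul (hf'.smulRight hg0))).sub
      ((contDiff_const.mul hf0).smul (hs'.smulRight hg0))

theorem IsRegulous.of_mul_eq {n k : ℕ} {s F h : (Fin n → ℝ) → ℝ} (hs : IsRegulous n k s)
    (hF : IsRegulous n k F) (hs0 : s ≠ 0) (hh : ContDiff ℝ k h) (hsh : ∀ x, s x * h x = F x) :
    IsRegulous n k h := by
  obtain ⟨hs_smooth, ps, qs, hqs, hs_eq⟩ := hs
  obtain ⟨-, pF, qF, hqF, hF_eq⟩ := hF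
  have hps : ps ≠ 0 := by
    rintro rfl
    exact hs0 (eq_zero_of_eval_mul_eq_zero hqs hs_smooth.continuous (by simpa using hs_eq))
  refine ⟨hh, qs * pF, ps * qF, mul_ne_zero hps hqF, fun x => ?_⟩
  rw [eval_mul, eval_mul, ← hs_eq, ← hF_eq, ← hsh]
  ring

theorem regulousRing.exists_pow_eq_mul_of_sq_le {n k : ℕ} {f s : regulousRing n k}
    (hfs : ∀ x, (f : (Fin n → ℝ) → ℝ) x ^ 2 ≤ (s : (Fin n → ℝ) → ℝ) x) :
    ∃ h : regulousRing n k, f ^ (3 * k + 3) = h * s := by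
  set F : (Fin n → ℝ) → ℝ := ↑f
  set S : (Fin n → ℝ) → ℝ := ↑s
  have hF0 (x) (hx : S x = 0) : F x = 0 :=
    (sq_nonpos_iff _).1 (hx ▸ hfs x)
  have hSh (x) : S x * (F x ^ (3 * k + 3) / S x) = F x ^ (3 * k + 3) := by
    by_cases hx : S x = 0
    · simp [hx, hF0 x hx]
    · field_simp
  by_cases hS0 : S = 0
  · refine ⟨0, Subtype.ext (funext fun x => ?_)⟩
    simpa using hF0 x (congrFun hS0 x)
  have hsmooth : ContDiff ℝ k fun x => F x ^ (3 * k + 3) / S x := by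
    simpa using contDiff_pow_div_pow_smul f.2.1 s.2.1 hfs le_rfl (contDiff_const (c := (1 : ℝ)))
      (N := 3 * k + 3) (b := 1) (by omega)
  refine ⟨⟨_, IsRegulous.of_mul_eq s.2 (f ^ (3 * k + 3)).2 hS0 hsmooth (by simpa using hSh)⟩, ?_⟩
  exact Subtype.ext (funext fun x => ((hSh x).symm.trans (mul_comm _ _) : _))

/-- **Regulous functions, Proposition `radreel`**: every radical ideal of the ring
`R^k(ℝⁿ)` of `k`-regulous functions is a real ideal: if a finite sum of squares
`f₁² + ⋯ + f_m²` belongs to `I`, then each `fᵢ` belongs to `I`. -/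
theorem radical_ideal_is_real (n k : ℕ) (I : Ideal (regulousRing n k))
    (hI : I.radical = I)
    (m : ℕ) (f : Fin m → regulousRing n k)
    (hsum : (∑ i : Fin m, f i ^ 2) ∈ I) :
    ∀ i : Fin m, f i ∈ I := by
  intro i
  have hle (x) :
      (f i : (Fin n → ℝ) → ℝ) x ^ 2 ≤ ((∑ j, f j ^ 2 : regulousRing n k) : _ → ℝ) x := by
    push_cast [Finset.sum_apply]
    exact Finset.single_le_sum (f := fun j => (f j : (Fin n → ℝ) → ℝ) x ^ 2)
      (fun j _ => sq_nonneg _) (Finset.mem_univ i)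
  obtain ⟨h, hh⟩ := regulousRing.exists_pow_eq_mul_of_sq_le hle
  rw [← hI]
  exact ⟨3 * k + 3, hh ▸ I.mul_mem_left h hsum⟩
end

section
/- Let n ≥ 2 and k be natural numbers. Then the ring R^k(ℝⁿ) of k-regulous functions on ℝⁿ is not Noetherian; in particular there exists a strictly increasing sequence I₀ ⊊ I₁ ⊊ I₂ ⊊ … of ideals of R^k(ℝⁿ). -/
open MvPolynomial

/-!
Let `x = u i`, `y = u j` be two coordinates of `ℝⁿ` and consider
`f_m = x ^ (2(k+1)) y ^ (k(m+1)+1) / (x² + y ^ (2(m+1))) ^ (k+1)`.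
Giving `x` weight `m + 1` and `y` weight `1`, the function `f_m` is quasi-homogeneous of weight
`k(m+1) + 1`; every partial derivative is a combination of such fractions whose weight is lower
by at most `m + 1`, and a fraction of positive weight extends continuously by `0` at the origin.
Hence `f_m` is `C^k`, so it is `k`-regulous.

On the curve `x = t ^ (m+2)`, `y = t` the fractions `f_0, …, f_m` are `O(t ^ (k(m+2)+2))`, whereas
the denominator of `f_(m+1)` is balanced there and `f_(m+1) = t ^ (k(m+2)+1) / 2 ^ (k+1)`.
Regulous functions are continuous, hence bounded near the start of the curve, so every element of
the ideal `(f_0, …, f_m)` is `o(f_(m+1))` along it. Thus `f_(m+1)` is not in that ideal and the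
ideals `(f_0, …, f_m)` increase strictly.
-/

open Filter Asymptotics Topology

section Ideals

variable {α : Type*} {S : Subring (α → ℝ)} {l : Filter α}

lemma isLittleO_of_mem_span {g : α → ℝ} (hS : ∀ f ∈ S, f =O[l] fun _ => (1 : ℝ)) {s : Set S}
    (hs : ∀ f ∈ s, (f : α → ℝ) =o[l] g) {f : S} (hf : f ∈ Ideal.span s) :
    (f : α → ℝ) =o[l] g := by
  induction hf using Submodule.span_induction with
  | mem f hf => exact hs f hf
  | zero => exact isLittleO_zero g l
  | add f f' _ _ hf hf' => exact hf.add hf'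
  | smul r f _ hf =>
    have hrf := (hS r r.2).mul_isLittleO hf
    simp only [one_mul] at hrf
    exact hrf

lemma notMem_span_of_isLittleO (hS : ∀ f ∈ S, f =O[l] fun _ => (1 : ℝ)) {s : Set S} {g : S}
    (hs : ∀ f ∈ s, (f : α → ℝ) =o[l] (g : α → ℝ)) (hg : ∃ᶠ x in l, (g : α → ℝ) x ≠ 0) :
    g ∉ Ideal.span s :=
  fun hmem => isLittleO_irrefl hg (isLittleO_of_mem_span hS hs hmem)

end Ideals

lemma strictMono_span_image_Iic {R : Type*} [Semiring R] {g : ℕ → R}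
    (hg : ∀ m, g (m + 1) ∉ Ideal.span (g '' Set.Iic m)) :
    StrictMono fun m => Ideal.span (g '' Set.Iic m) :=
  strictMono_nat_of_lt_succ fun m => lt_of_le_of_ne
    (Ideal.span_mono (Set.image_mono (Set.Iic_subset_Iic.mpr m.le_succ)))
    fun h => hg m (h ▸ Ideal.subset_span ⟨m + 1, Set.mem_Iic.mpr le_rfl, rfl⟩)

namespace Regulous

noncomputable def quasiNorm (q : ℕ) (p : ℝ × ℝ) : ℝ := p.1 ^ 2 + p.2 ^ (2 * q)

/-- At the zero of `quasiNorm q` (the origin, when `q ≠ 0`) the value is the junk `x / 0 = 0`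
whenever `c ≠ 0`. -/
noncomputable def quasiFrac (q a b c : ℕ) (p : ℝ × ℝ) : ℝ :=
  p.1 ^ a * p.2 ^ b / quasiNorm q p ^ c

variable {q a b c : ℕ}

lemma sq_le_quasiNorm (q : ℕ) (p : ℝ × ℝ) : p.1 ^ 2 ≤ quasiNorm q p := by
  unfold quasiNorm; rw [pow_mul]; simp only [le_add_iff_nonneg_right]; positivity

lemma pow_le_quasiNorm (q : ℕ) (p : ℝ × ℝ) : p.2 ^ (2 * q) ≤ quasiNorm q p := by
  unfold quasiNorm; simp only [le_add_iff_nonneg_left]; positivity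

lemma quasiNorm_nonneg (q : ℕ) (p : ℝ × ℝ) : 0 ≤ quasiNorm q p :=
  (sq_nonneg _).trans (sq_le_quasiNorm q p)

lemma quasiNorm_eq_zero_iff (hq : q ≠ 0) {p : ℝ × ℝ} : quasiNorm q p = 0 ↔ p = 0 := by
  have hy : 0 ≤ p.2 ^ (2 * q) := by rw [pow_mul]; positivity
  simp only [quasiNorm, add_eq_zero_iff_of_nonneg (sq_nonneg _) hy, pow_eq_zero_iff two_ne_zero,
    pow_eq_zero_iff (mul_ne_zero two_ne_zero hq), Prod.ext_iff, Prod.fst_zero, Prod.snd_zero]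

lemma quasiNorm_le_two_mul_sq (hq : q ≠ 0) {p : ℝ × ℝ} (hp : ‖p‖ ≤ 1) :
    quasiNorm q p ≤ 2 * ‖p‖ ^ 2 := by
  have hx : p.1 ^ 2 ≤ ‖p‖ ^ 2 := by
    rw [← sq_abs]; exact pow_le_pow_left₀ (abs_nonneg _) (norm_fst_le p) 2
  have hy : p.2 ^ (2 * q) ≤ ‖p‖ ^ 2 := calc
    p.2 ^ (2 * q) = |p.2| ^ (2 * q) := by rw [pow_mul, ← sq_abs, ← pow_mul]
    _ ≤ ‖p‖ ^ (2 * q) := pow_le_pow_left₀ (abs_nonneg _) (norm_snd_le p) _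
    _ ≤ ‖p‖ ^ 2 := pow_le_pow_of_le_one (norm_nonneg p) hp (by omega)
  unfold quasiNorm
  linarith

lemma zero_pow_mul_zero_pow (h : 2 * q * c < q * a + b) : (0 : ℝ) ^ a * (0 : ℝ) ^ b = 0 := by
  have hab : a ≠ 0 ∨ b ≠ 0 := by by_contra! h'; simp [h'.1, h'.2] at h
  rcases hab with ha | hb <;> simp [*]

lemma quasiFrac_zero (h : 2 * q * c < q * a + b) : quasiFrac q a b c 0 = 0 := by
  simp [quasiFrac, zero_pow_mul_zero_pow h]

lemma quasiNorm_pow_mul_quasiFrac (hq : q ≠ 0) (h : 2 * q * c < q * a + b) (p : ℝ × ℝ) :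
    quasiNorm q p ^ c * quasiFrac q a b c p = p.1 ^ a * p.2 ^ b := by
  rcases eq_or_ne p 0 with rfl | hp
  · simp [quasiFrac_zero h, zero_pow_mul_zero_pow h]
  · have hρ := (quasiNorm_eq_zero_iff hq).not.mpr hp
    unfold quasiFrac
    field_simp

lemma abs_monomial_pow_le (q a b : ℕ) (p : ℝ × ℝ) :
    |p.1 ^ a * p.2 ^ b| ^ (2 * q) ≤ quasiNorm q p ^ (q * a + b) := by
  have hy : |p.2| ^ (2 * q) = p.2 ^ (2 * q) := by rw [pow_mul, sq_abs, ← pow_mul]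
  have hy₀ : 0 ≤ p.2 ^ (2 * q) := by rw [pow_mul]; positivity
  calc |p.1 ^ a * p.2 ^ b| ^ (2 * q) = (|p.1| ^ 2) ^ (q * a) * (|p.2| ^ (2 * q)) ^ b := by
        rw [abs_mul, abs_pow, abs_pow, mul_pow, ← pow_mul, ← pow_mul, ← pow_mul, ← pow_mul]
        ring_nf
    _ = (p.1 ^ 2) ^ (q * a) * (p.2 ^ (2 * q)) ^ b := by rw [sq_abs, hy]
    _ ≤ quasiNorm q p ^ (q * a) * quasiNorm q p ^ b :=
        mul_le_mul (pow_le_pow_left₀ (sq_nonneg _) (sq_le_quasiNorm q p) _)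
          (pow_le_pow_left₀ hy₀ (pow_le_quasiNorm q p) _) (pow_nonneg hy₀ _)
          (pow_nonneg (quasiNorm_nonneg q p) _)
    _ = quasiNorm q p ^ (q * a + b) := (pow_add _ _ _).symm

lemma abs_quasiFrac_pow_le {w : ℕ} (hq : q ≠ 0) (hw : q * a + b = w + 2 * q * c) (hw₀ : w ≠ 0)
    (p : ℝ × ℝ) : |quasiFrac q a b c p| ^ (2 * q) ≤ quasiNorm q p ^ w := by
  rcases (quasiNorm_nonneg q p).eq_or_lt with h₀ | hpos
  · obtain rfl := (quasiNorm_eq_zero_iff hq).mp h₀.symm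
    rw [quasiFrac_zero (by omega), ← h₀]
    simp [hq, hw₀]
  · have key : (quasiNorm q p ^ c * |quasiFrac q a b c p|) ^ (2 * q) ≤
        quasiNorm q p ^ (w + 2 * q * c) := by
      rw [← hw, ← abs_of_pos (pow_pos hpos c), ← abs_mul, quasiFrac,
        mul_div_cancel₀ _ (by positivity)]
      exact abs_monomial_pow_le q a b p
    rw [mul_pow, ← pow_mul, pow_add, mul_comm (quasiNorm q p ^ w), mul_comm c] at key
    exact le_of_mul_le_mul_left key (by positivity)

/-- With `x` of weight `q` and `y` of weight `1`, `quasiFrac q a b c` is quasi-homogeneous of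
weight `q * a + b - 2 * q * c`. -/
lemma quasiFrac_isLittleO (hq : q ≠ 0) {m : ℕ} (h : m * q + 2 * q * c < q * a + b) :
    quasiFrac q a b c =o[𝓝 0] fun p => ‖p‖ ^ m := by
  obtain ⟨w, hw⟩ : ∃ w, q * a + b = w + 2 * q * c := ⟨q * a + b - 2 * q * c, by omega⟩
  have hbound : (quasiFrac q a b c ^ (2 * q)) =O[𝓝 0] fun p => ‖p‖ ^ (2 * w) := by
    refine IsBigO.of_bound (2 ^ w) ?_
    filter_upwards [Metric.closedBall_mem_nhds (0 : ℝ × ℝ) one_pos] with p hp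
    rw [mem_closedBall_zero_iff] at hp
    calc ‖(quasiFrac q a b c ^ (2 * q)) p‖ = |quasiFrac q a b c p| ^ (2 * q) := by
          simp [Real.norm_eq_abs]
      _ ≤ quasiNorm q p ^ w := abs_quasiFrac_pow_le hq hw (by omega) p
      _ ≤ (2 * ‖p‖ ^ 2) ^ w :=
          pow_le_pow_left₀ (quasiNorm_nonneg q p) (quasiNorm_le_two_mul_sq hq hp) w
      _ = 2 ^ w * ‖‖p‖ ^ (2 * w)‖ := by
          rw [mul_pow, ← pow_mul, norm_pow, norm_norm, mul_comm 2 w]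
  have hsmall : (fun p : ℝ × ℝ => ‖p‖ ^ (2 * w)) =o[𝓝 0] fun p => ‖p‖ ^ (m * (2 * q)) :=
    (isLittleO_pow_pow (𝕜 := ℝ) (by nlinarith)).comp_tendsto tendsto_norm_zero
  refine IsLittleO.of_pow (n := 2 * q) ?_ (by omega)
  exact (hbound.trans_isLittleO hsmall).congr_right fun p => by simp [pow_mul]

lemma continuous_quasiFrac (hq : q ≠ 0) (h : 2 * q * c < q * a + b) :
    Continuous (quasiFrac q a b c) := by
  refine continuous_iff_continuousAt.mpr fun p => ?_
  rcases eq_or_ne p 0 with rfl | hp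
  · have hsmall := quasiFrac_isLittleO hq (m := 0) (by simpa using h)
    simp only [pow_zero] at hsmall
    rw [ContinuousAt, quasiFrac_zero h]
    exact (isLittleO_one_iff ℝ).mp hsmall
  · have hρ : quasiNorm q p ^ c ≠ 0 := pow_ne_zero _ ((quasiNorm_eq_zero_iff hq).not.mpr hp)
    unfold quasiFrac quasiNorm at hρ ⊢
    fun_prop (disch := exact hρ)

open ContinuousLinearMap in
noncomputable def quasiFracDeriv (q a b c : ℕ) (p : ℝ × ℝ) : ℝ × ℝ →L[ℝ] ℝ :=
  (a * quasiFrac q (a - 1) b c p - 2 * c * quasiFrac q (a + 1) b (c + 1) p) • fst ℝ ℝ ℝ +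
    (b * quasiFrac q a (b - 1) c p - 2 * q * c * quasiFrac q a (b + 2 * q - 1) (c + 1) p) •
      snd ℝ ℝ ℝ

lemma quasiFracDeriv_weights {m : ℕ} (hq : q ≠ 0) (h : (m + 1) * q + 2 * q * c < q * a + b) :
    m * q + 2 * q * c < q * (a - 1) + b ∧ m * q + 2 * q * (c + 1) < q * (a + 1) + b ∧
      m * q + 2 * q * c < q * a + (b - 1) ∧
      m * q + 2 * q * (c + 1) < q * a + (b + 2 * q - 1) := by
  obtain ⟨q, rfl⟩ := Nat.exists_eq_add_one_of_ne_zero hq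
  refine ⟨?_, by nlinarith, ?_, ?_⟩
  · rcases a with _ | a <;> simp only [zero_tsub, mul_zero, zero_add, add_tsub_cancel_right] <;>
      nlinarith
  · rcases b with _ | b <;> simp only [zero_tsub, add_zero, add_tsub_cancel_right] <;> nlinarith
  · rw [show b + 2 * (q + 1) - 1 = b + 2 * q + 1 by omega]; nlinarith

lemma quasiFracDeriv_zero (hq : q ≠ 0) (h : q + 2 * q * c < q * a + b) :
    quasiFracDeriv q a b c 0 = 0 := by
  obtain ⟨h₁, h₂, h₃, h₄⟩ := quasiFracDeriv_weights (m := 0) hq (by simpa using h)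
  simp only [zero_mul, zero_add] at h₁ h₂ h₃ h₄
  simp [quasiFracDeriv, quasiFrac_zero, h₁, h₂, h₃, h₄]

lemma hasFDerivAt_quasiFrac_of_ne_zero (hq : q ≠ 0) {p : ℝ × ℝ} (hp : p ≠ 0) :
    HasFDerivAt (quasiFrac q a b c) (quasiFracDeriv q a b c p) p := by
  have hρ : quasiNorm q p ≠ 0 := (quasiNorm_eq_zero_iff hq).not.mpr hp
  have hnum := (hasFDerivAt_fst (𝕜 := ℝ) (p := p)).pow a |>.mul (hasFDerivAt_snd.pow b)
  have hden := ((hasFDerivAt_fst (𝕜 := ℝ) (p := p)).pow 2 |>.add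
    (hasFDerivAt_snd.pow (2 * q))).pow c
  refine (hnum.mul ((hasDerivAt_inv (pow_ne_zero c hρ)).comp_hasFDerivAt p hden)).congr_fderiv ?_
  have hexp (y : ℝ) : y ^ (b + 2 * q - 1) = y ^ b * y ^ (2 * q - 1) := by
    rw [← pow_add]; congr 1; omega
  unfold quasiNorm at hρ
  ext <;> rcases c with _ | c <;>
    simp [quasiFracDeriv, quasiFrac, quasiNorm, hexp] <;> field_simp <;> ring

lemma hasFDerivAt_quasiFrac (hq : q ≠ 0) (h : q + 2 * q * c < q * a + b) (p : ℝ × ℝ) :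
    HasFDerivAt (quasiFrac q a b c) (quasiFracDeriv q a b c p) p := by
  rcases eq_or_ne p 0 with rfl | hp
  · rw [quasiFracDeriv_zero hq h, hasFDerivAt_iff_isLittleO_nhds_zero]
    have hsmall := quasiFrac_isLittleO hq (m := 1) (by simpa using h)
    simp only [pow_one] at hsmall
    simpa [quasiFrac_zero (show 2 * q * c < q * a + b by omega)] using
      isLittleO_norm_right.mp hsmall
  · exact hasFDerivAt_quasiFrac_of_ne_zero hq hp

lemma contDiff_quasiFrac (hq : q ≠ 0) {m : ℕ} (h : m * q + 2 * q * c < q * a + b) :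
    ContDiff ℝ m (quasiFrac q a b c) := by
  induction m generalizing a b c with
  | zero => exact contDiff_zero.mpr (continuous_quasiFrac hq (by simpa using h))
  | succ m ih =>
    obtain ⟨h₁, h₂, h₃, h₄⟩ := quasiFracDeriv_weights hq h
    refine contDiff_succ_iff_hasFDerivAt.mpr ⟨quasiFracDeriv q a b c, ?_,
      hasFDerivAt_quasiFrac hq (by nlinarith)⟩
    unfold quasiFracDeriv
    exact (((contDiff_const.mul (ih h₁)).sub (contDiff_const.mul (ih h₂))).smul
      contDiff_const).add
        (((contDiff_const.mul (ih h₃)).sub (contDiff_const.mul (ih h₄))).smul contDiff_const)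

lemma abs_quasiFrac_curve_le {σ e : ℕ} (h : e + 2 * q * c ≤ σ * a + b) {t : ℝ} (ht₀ : 0 < t)
    (ht₁ : t ≤ 1) : |quasiFrac q a b c (t ^ σ, t)| ≤ t ^ e := by
  have hρ : t ^ (2 * q) ≤ quasiNorm q (t ^ σ, t) := pow_le_quasiNorm q (t ^ σ, t)
  rw [abs_of_nonneg (by unfold quasiFrac quasiNorm; positivity), quasiFrac,
    div_le_iff₀ (pow_pos ((pow_pos ht₀ _).trans_le hρ) c)]
  calc (t ^ σ, t).1 ^ a * (t ^ σ, t).2 ^ b = t ^ (σ * a + b) := by simp [pow_add, pow_mul]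
    _ ≤ t ^ (e + 2 * q * c) := pow_le_pow_of_le_one ht₀.le ht₁ h
    _ = t ^ e * (t ^ (2 * q)) ^ c := by rw [pow_add, pow_mul]
    _ ≤ t ^ e * quasiNorm q (t ^ σ, t) ^ c := by gcongr

/-- Its weight `k * (m + 1) + 1` is just enough for it to be `C^k`. -/
noncomputable def generator (k m : ℕ) : ℝ × ℝ → ℝ :=
  quasiFrac (m + 1) (2 * (k + 1)) (k * (m + 1) + 1) (k + 1)

lemma generator_curve_self (k m : ℕ) {t : ℝ} (ht : t ≠ 0) :
    generator k m (t ^ (m + 1), t) = t ^ (k * (m + 1) + 1) / 2 ^ (k + 1) := by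
  have hρ : quasiNorm (m + 1) (t ^ (m + 1), t) = 2 * t ^ (2 * (m + 1)) := by
    simp only [quasiNorm]; ring
  rw [generator, quasiFrac, hρ]
  field_simp
  ring

/-- The generator of index `j + 1` is the first one whose denominator is balanced on the curve
`(t ^ (j + 2), t)`. -/
lemma isLittleO_generator_curve (k : ℕ) {m j : ℕ} (hm : m ≤ j) :
    (fun t => generator k m (t ^ (j + 2), t)) =o[𝓝[>] 0]
      fun t => generator k (j + 1) (t ^ (j + 2), t) := by
  have hsmall : (fun t => generator k m (t ^ (j + 2), t)) =O[𝓝[>] 0]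
      fun t => t ^ (k * (j + 2) + 2) := by
    refine IsBigO.of_bound 1 ?_
    filter_upwards [Ioc_mem_nhdsGT one_pos] with t ht
    rw [one_mul, Real.norm_eq_abs, Real.norm_of_nonneg (pow_nonneg ht.1.le _)]
    exact abs_quasiFrac_curve_le (by nlinarith) ht.1 ht.2
  have hpow : (fun t : ℝ => t ^ (k * (j + 2) + 2)) =o[𝓝[>] 0] fun t => t ^ (k * (j + 2) + 1) :=
    (isLittleO_pow_pow (by omega)).mono nhdsWithin_le_nhds
  have hself : (fun t : ℝ => t ^ (k * (j + 2) + 1)) =O[𝓝[>] 0]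
      fun t => generator k (j + 1) (t ^ (j + 2), t) := by
    refine (isBigO_self_const_mul (inv_ne_zero (pow_ne_zero (k + 1) two_ne_zero)) _ _).congr'
      EventuallyEq.rfl ?_
    filter_upwards [self_mem_nhdsWithin] with t ht
    rw [generator_curve_self k (j + 1) (ne_of_gt ht), div_eq_inv_mul]
  exact hsmall.trans_isLittleO (hpow.trans_isBigO hself)

section Euclidean

variable {n : ℕ}

noncomputable def planeProj (i j : Fin n) : (Fin n → ℝ) →L[ℝ] ℝ × ℝ :=
  (ContinuousLinearMap.proj i).prod (ContinuousLinearMap.proj j)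

noncomputable def planeCurve (i j : Fin n) (σ : ℕ) (t : ℝ) : Fin n → ℝ :=
  Pi.single i (t ^ σ) + Pi.single j t

lemma continuous_planeCurve (i j : Fin n) (σ : ℕ) : Continuous (planeCurve i j σ) :=
  ((continuous_single (A := fun _ => ℝ) i).comp (continuous_pow σ)).add
    (continuous_single (A := fun _ => ℝ) j)

lemma planeProj_planeCurve {i j : Fin n} (hij : i ≠ j) (σ : ℕ) (t : ℝ) :
    planeProj i j (planeCurve i j σ t) = (t ^ σ, t) := by
  simp [planeProj, planeCurve, hij, hij.symm]

lemma isRegulous_quasiFrac_comp {k : ℕ} (hq : q ≠ 0) (h : k * q + 2 * q * c < q * a + b)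
    (i j : Fin n) : IsRegulous n k (quasiFrac q a b c ∘ planeProj i j) := by
  refine ⟨(contDiff_quasiFrac hq h).comp (planeProj i j).contDiff, X i ^ a * X j ^ b,
    (X i ^ 2 + X j ^ (2 * q)) ^ c, fun h₀ => ?_, fun x => ?_⟩
  · simpa using congrArg (eval fun _ => (1 : ℝ)) h₀
  · simpa [planeProj, quasiNorm] using
      quasiNorm_pow_mul_quasiFrac hq (by omega) (planeProj i j x)

lemma isRegulous_generator_comp (k m : ℕ) (i j : Fin n) :
    IsRegulous n k (generator k m ∘ planeProj i j) :=
  isRegulous_quasiFrac_comp (by omega) (by nlinarith) i j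

lemma generator_comp_notMem_span {S : Subring ((Fin n → ℝ) → ℝ)} (hS : ∀ f ∈ S, Continuous f)
    {i j : Fin n} (hij : i ≠ j) {k : ℕ} {g : ℕ → S}
    (hg : ∀ m, (g m : (Fin n → ℝ) → ℝ) = generator k m ∘ planeProj i j) (m : ℕ) :
    g (m + 1) ∉ Ideal.span (g '' Set.Iic m) := by
  have hcurve (m' : ℕ) (t : ℝ) : (g m' : (Fin n → ℝ) → ℝ) (planeCurve i j (m + 2) t) =
      generator k m' (t ^ (m + 2), t) := by
    simp [hg, planeProj_planeCurve hij]
  refine notMem_span_of_isLittleO (l := map (planeCurve i j (m + 2)) (𝓝[>] 0)) ?_ ?_ ?_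
  · intro f hf
    exact ((hS f hf).tendsto _ |>.isBigO_one ℝ).mono
      ((continuous_planeCurve i j _).tendsto 0 |>.mono_left nhdsWithin_le_nhds)
  · rintro _ ⟨m', hm', rfl⟩
    simpa only [isLittleO_map, Function.comp_def, hcurve] using isLittleO_generator_curve k hm'
  · rw [frequently_map]
    refine Eventually.frequently ?_
    filter_upwards [self_mem_nhdsWithin] with t ht
    rw [hcurve, generator_curve_self k (m + 1) (ne_of_gt ht)]
    exact div_ne_zero (pow_ne_zero _ (ne_of_gt ht)) (by positivity)

end Euclidean

end Regulous

open Regulous in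
/-- **Regulous functions, Proposition (non-noethérianité)**: for `n ≥ 2` the ring
`R^k(ℝⁿ)` of `k`-regulous functions on `ℝⁿ` is not Noetherian; in particular it carries a
strictly increasing sequence of ideals. -/
theorem regulousRing_not_noetherian (n k : ℕ) (hn : 2 ≤ n) :
    ¬ IsNoetherianRing (regulousRing n k) ∧
      ∃ I : ℕ → Ideal (regulousRing n k), ∀ i : ℕ, I i < I (i + 1) := by
  obtain ⟨i, j, hij⟩ : ∃ i j : Fin n, i ≠ j :=
    ⟨⟨0, by omega⟩, ⟨1, by omega⟩, by simp [Fin.ext_iff]⟩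
  let g : ℕ → regulousRing n k := fun m => ⟨_, isRegulous_generator_comp k m i j⟩
  have hchain := strictMono_span_image_Iic
    (generator_comp_notMem_span (S := regulousRing n k) (fun f hf => hf.1.continuous) hij
      (g := g) fun _ => rfl)
  exact ⟨fun _ => not_strictMono_of_wellFoundedGT _ hchain, _, fun m => hchain m.lt_succ_self⟩
end

section
/- Let n, k be natural numbers and let f : ℝⁿ → ℝ be a continuous function for which there exist real polynomials p, q in n variables with q ≠ 0 and f(x) = p(x)/q(x) for every x with q(x) ≠ 0. Suppose that for each integer j with 1 ≤ j ≤ k there exists a continuous map G_j : ℝⁿ → (the space of continuous j-multilinear maps (ℝⁿ)^j → ℝ) such that G_j(x) equals the j-th iterated Fréchet derivative of f at x for every x with q(x) ≠ 0. Then f is of class C^k on all of ℝⁿ (and hence f is k-regulous). -/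
/-!
Let `Z = {q = 0}`. A line through a point off `Z` meets `Z` in the finitely many roots of a
nonzero one-variable polynomial, and a continuous function of one variable whose derivative
extends continuously across finitely many points is differentiable there with that derivative.
So along the segment from `x` to any `y ∉ Z` the mean value inequality bounds
`f y - f x - G₁ x (y - x)` by `sup ‖G₁ - G₁ x‖ * ‖y - x‖`; since `Zᶜ` is dense this bound holds
for all `y` near `x`, and `f` is differentiable with continuous derivative `G₁`. Induction on
`k`, applied to `fderiv f`, whose extended jets are the curried `G (j + 1)`, gives `C^k`.
-/

open MvPolynomial

open Set Topology

section

variable {E F : Type*} [NormedAddCommGroup E] [NormedSpace ℝ E]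
  [NormedAddCommGroup F] [NormedSpace ℝ F]

def MeetsLinesFinitely (Z : Set E) : Prop :=
  ∀ x ∉ Z, ∀ v : E, {t : ℝ | x + t • v ∈ Z}.Finite

theorem hasDerivAt_of_eventually_hasDerivAt_of_ne {φ ψ : ℝ → F} {a : ℝ}
    (h : ∀ᶠ t in 𝓝[≠] a, HasDerivAt φ (ψ t) t) (hφ : ContinuousAt φ a)
    (hψ : ContinuousAt ψ a) : HasDerivAt φ (ψ a) a := by
  have hdiff : DifferentiableOn ℝ φ {t | HasDerivAt φ (ψ t) t} :=
    fun t ht => ht.differentiableAt.differentiableWithinAt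
  have hR : ∀ᶠ t in 𝓝[>] a, HasDerivAt φ (ψ t) t :=
    h.filter_mono (nhdsWithin_mono a fun _ => ne_of_gt)
  have hL : ∀ᶠ t in 𝓝[<] a, HasDerivAt φ (ψ t) t :=
    h.filter_mono (nhdsWithin_mono a fun _ => ne_of_lt)
  have right : HasDerivWithinAt φ (ψ a) (Ici a) a :=
    hasDerivWithinAt_Ici_of_tendsto_deriv hdiff hφ.continuousWithinAt hR <|
      (hψ.tendsto.mono_left nhdsWithin_le_nhds).congr' <| hR.mono fun _ ht => ht.deriv.symm
  have left : HasDerivWithinAt φ (ψ a) (Iic a) a :=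
    hasDerivWithinAt_Iic_of_tendsto_deriv hdiff hφ.continuousWithinAt hL <|
      (hψ.tendsto.mono_left nhdsWithin_le_nhds).congr' <| hL.mono fun _ ht => ht.deriv.symm
  simpa using left.union right

theorem hasDerivAt_of_hasDerivAt_off_finite {φ ψ : ℝ → F} {S : Set ℝ} (hS : S.Finite)
    (hφ : Continuous φ) (hψ : Continuous ψ) (h : ∀ t ∉ S, HasDerivAt φ (ψ t) t) (t : ℝ) :
    HasDerivAt φ (ψ t) t := by
  refine hasDerivAt_of_eventually_hasDerivAt_of_ne ?_ hφ.continuousAt hψ.continuousAt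
  have hnhds : (S \ {t})ᶜ ∈ 𝓝 t :=
    (hS.sdiff.isClosed.isOpen_compl).mem_nhds fun ht => ht.2 rfl
  filter_upwards [mem_nhdsWithin_of_mem_nhds hnhds, self_mem_nhdsWithin] with u hu hne
  exact h u fun huS => hu ⟨huS, hne⟩

theorem MeetsLinesFinitely.dense_compl {Z : Set E} (hZ : MeetsLinesFinitely Z)
    (hne : Zᶜ.Nonempty) : Dense Zᶜ := by
  obtain ⟨y, hy⟩ := hne
  intro x
  have hline : Continuous fun t : ℝ => y + t • (x - y) := by fun_prop
  have h1 : (1 : ℝ) ∈ closure {t : ℝ | y + t • (x - y) ∈ Z}ᶜ :=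
    ((hZ y hy (x - y)).countable.dense_compl ℝ).closure_eq ▸ mem_univ 1
  simpa using map_mem_closure (t := Zᶜ) hline h1 fun t ht => ht

theorem MeetsLinesFinitely.finite_line_through {Z : Set E} (hZ : MeetsLinesFinitely Z)
    (x : E) {y : E} (hy : y ∉ Z) : {t : ℝ | x + t • (y - x) ∈ Z}.Finite := by
  refine ((hZ y hy (x - y)).preimage (sub_right_injective (b := (1 : ℝ))).injOn).subset ?_
  intro t ht
  have : y + (1 - t) • (x - y) = x + t • (y - x) := by module
  simpa [this] using ht

theorem norm_sub_sub_le_of_hasFDerivAt_off {Z : Set E} (hZ : MeetsLinesFinitely Z)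
    {g : E → F} {G : E → E →L[ℝ] F} (hg : Continuous g) (hG : Continuous G)
    (hd : ∀ y ∉ Z, HasFDerivAt g (G y) y) {x y : E} (hy : y ∉ Z) {ε : ℝ}
    (hε : ∀ z ∈ segment ℝ x y, ‖G z - G x‖ ≤ ε) :
    ‖g y - g x - G x (y - x)‖ ≤ ε * ‖y - x‖ := by
  set v := y - x
  have hline : ∀ t : ℝ, HasDerivAt (fun t : ℝ => x + t • v) v t := fun t => by
    simpa using ((hasDerivAt_id t).smul_const v).const_add x
  have hderiv : ∀ t : ℝ, HasDerivAt (fun t : ℝ => g (x + t • v) - t • G x v)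
      (G (x + t • v) v - G x v) t := by
    refine hasDerivAt_of_hasDerivAt_off_finite (hZ.finite_line_through x hy)
      (by fun_prop) (by fun_prop) fun t ht => ?_
    have := ((hd (x + t • v) ht).comp_hasDerivAt t (hline t)).sub
      ((hasDerivAt_id' t).smul_const (G x v))
    rwa [one_smul] at this
  have hbound : ∀ t ∈ Ico (0 : ℝ) 1, ‖G (x + t • v) v - G x v‖ ≤ ε * ‖v‖ := fun t ht => by
    have hz : x + t • v ∈ segment ℝ x y :=
      segment_eq_image' ℝ x y ▸ ⟨t, Ico_subset_Icc_self ht, rfl⟩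
    calc ‖G (x + t • v) v - G x v‖ = ‖(G (x + t • v) - G x) v‖ := rfl
      _ ≤ ‖G (x + t • v) - G x‖ * ‖v‖ := ContinuousLinearMap.le_opNorm _ _
      _ ≤ ε * ‖v‖ := by gcongr; exact hε _ hz
  have := norm_image_sub_le_of_norm_deriv_le_segment'
    (fun t _ => (hderiv t).hasDerivWithinAt) hbound 1 (right_mem_Icc.2 zero_le_one)
  simpa [v, sub_right_comm] using this

theorem hasFDerivAt_of_hasFDerivAt_off {Z : Set E} (hZ : MeetsLinesFinitely Z)
    (hdense : Dense Zᶜ)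
    {g : E → F} {G : E → E →L[ℝ] F} (hg : Continuous g) (hG : Continuous G)
    (hd : ∀ y ∉ Z, HasFDerivAt g (G y) y) (x : E) : HasFDerivAt g (G x) x := by
  rw [hasFDerivAt_iff_isLittleO_nhds_zero, Asymptotics.isLittleO_iff]
  intro ε hε
  obtain ⟨δ, hδ, hGδ⟩ := Metric.continuousAt_iff.1 hG.continuousAt ε hε
  have hclosed : IsClosed {y | ‖g y - g x - G x (y - x)‖ ≤ ε * ‖y - x‖} :=
    isClosed_le (by fun_prop) (by fun_prop)
  have hball : Metric.ball x δ ⊆ {y | ‖g y - g x - G x (y - x)‖ ≤ ε * ‖y - x‖} := by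
    refine (hdense.open_subset_closure_inter Metric.isOpen_ball).trans
      (hclosed.closure_subset_iff.2 ?_)
    rintro z ⟨hz, hzZ⟩
    refine norm_sub_sub_le_of_hasFDerivAt_off hZ hg hG hd hzZ fun w hw => ?_
    rw [← dist_eq_norm]
    exact (hGδ ((convex_ball x δ).segment_subset (Metric.mem_ball_self hδ) hz hw)).le
  filter_upwards [Metric.ball_mem_nhds 0 hδ] with h hh
  simpa using hball (show x + h ∈ Metric.ball x δ by simpa using hh)

end

section

universe u

-- One universe for `E` and `F`: the induction passes from `F` to `E →L[ℝ] F`.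
variable {E F : Type u} [NormedAddCommGroup E] [NormedSpace ℝ E]
  [NormedAddCommGroup F] [NormedSpace ℝ F]

theorem contDiff_of_continuous_jet_off {Z : Set E} (hZc : IsClosed Z)
    (hZ : MeetsLinesFinitely Z) (hdense : Dense Zᶜ) (k : ℕ)
    {g : E → F} (hg : Continuous g) (hsm : ContDiffOn ℝ k g Zᶜ)
    (hjet : ∀ j : ℕ, 1 ≤ j → j ≤ k →
      ∃ G : E → ContinuousMultilinearMap ℝ (fun _ : Fin j => E) F,
        Continuous G ∧ ∀ x ∉ Z, G x = iteratedFDeriv ℝ j g x) :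
    ContDiff ℝ k g := by
  induction k generalizing F with
  | zero => exact contDiff_zero.2 hg
  | succ k ih =>
    obtain ⟨G₁, hG₁c, hG₁⟩ := hjet 1 le_rfl (by omega)
    let G : E → E →L[ℝ] F := fun x => continuousMultilinearCurryFin1 ℝ E F (G₁ x)
    have hGc : Continuous G := (continuousMultilinearCurryFin1 ℝ E F).continuous.comp hG₁c
    have hderiv : ∀ x, HasFDerivAt g (G x) x := by
      refine hasFDerivAt_of_hasFDerivAt_off hZ hdense hg hGc fun y hy => ?_
      have hGy : G y = fderiv ℝ g y := by ext v; simp [G, hG₁ y hy]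
      rw [hGy]
      exact ((hsm.differentiableOn (by simp) y hy).differentiableAt
        (hZc.isOpen_compl.mem_nhds hy)).hasFDerivAt
    have hfderiv : fderiv ℝ g = G := funext fun x => (hderiv x).fderiv
    rw [Nat.cast_succ, contDiff_succ_iff_fderiv]
    refine ⟨fun x => (hderiv x).differentiableAt, by simp, ih ?_ ?_ ?_⟩
    · exact hfderiv ▸ hGc
    · exact hsm.fderiv_of_isOpen hZc.isOpen_compl le_rfl
    · intro j hj1 hjk
      obtain ⟨H, hHc, hH⟩ := hjet (j + 1) (by omega) (by omega)
      refine ⟨fun x => continuousMultilinearCurryRightEquiv' ℝ j E F (H x),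
        (continuousMultilinearCurryRightEquiv' ℝ j E F).continuous.comp hHc, fun x hx => ?_⟩
      dsimp only
      rw [hH x hx, iteratedFDeriv_succ_eq_comp_right]
      simp

end

namespace MvPolynomial

variable {σ R : Type*} [CommRing R] [IsDomain R]

theorem finite_setOf_eval_add_smul_eq_zero {q : MvPolynomial σ R} {x : σ → R}
    (hx : eval x q ≠ 0) (v : σ → R) : {t : R | eval (x + t • v) q = 0}.Finite := by
  let r : Polynomial R :=
    aeval (fun i => Polynomial.C (x i) + Polynomial.C (v i) * Polynomial.X) q
  have hr (t : R) : r.eval t = eval (x + t • v) q := by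
    have hline : (fun i => Polynomial.aeval t (Polynomial.C (x i) + Polynomial.C (v i) *
        Polynomial.X)) = x + t • v := by
      funext i
      simp only [map_add, map_mul, Polynomial.aeval_C, Polynomial.aeval_X, Pi.add_apply,
        Pi.smul_apply, smul_eq_mul, Algebra.algebraMap_self, RingHom.id_apply]
      ring
    rw [← Polynomial.coe_aeval_eq_eval, ← AlgHom.comp_apply, comp_aeval, hline]
    rfl
  have hr0 : r ≠ 0 := fun h => hx (by simpa [h] using (hr 0).symm)
  exact (Polynomial.finite_setOfPred_isRoot hr0).subset fun t ht => by simpa [hr] using ht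

end MvPolynomial

/-- **Regulous functions, Théorème `thjkc0`**: a continuous rational function `f = p/q` on
`ℝⁿ` whose `k`-jet on the dense open set `{q ≠ 0}` extends continuously to `ℝⁿ` (each
iterated Fréchet derivative of order `1 ≤ j ≤ k` extends to a continuous family of
`j`-multilinear maps) is of class `C^k` on all of `ℝⁿ`, hence `k`-regulous. -/
theorem regulous_of_continuous_jet (n k : ℕ) (f : (Fin n → ℝ) → ℝ)
    (hcont : Continuous f)
    (p q : MvPolynomial (Fin n) ℝ) (hq : q ≠ 0)
    (hpq : ∀ x : Fin n → ℝ, eval x q ≠ 0 → f x = eval x p / eval x q)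
    (hjet : ∀ j : ℕ, 1 ≤ j → j ≤ k →
      ∃ G : (Fin n → ℝ) →
          ContinuousMultilinearMap ℝ (fun _ : Fin j => (Fin n → ℝ)) ℝ,
        Continuous G ∧
        ∀ x : Fin n → ℝ, eval x q ≠ 0 → G x = iteratedFDeriv ℝ j f x) :
    ContDiff ℝ k f ∧ IsRegulous n k f := by
  let Z := {x : Fin n → ℝ | eval x q = 0}
  have hZc : IsClosed Z := isClosed_eq (continuous_eval q) continuous_const
  have hZ : MeetsLinesFinitely Z :=
    fun _ hx => finite_setOf_eval_add_smul_eq_zero hx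
  have hne : Zᶜ.Nonempty :=
    not_forall.1 fun h => hq (MvPolynomial.funext fun x => by simpa [Z] using h x)
  have hdense : Dense Zᶜ := hZ.dense_compl hne
  have hsm : ContDiffOn ℝ k f Zᶜ :=
    ((AnalyticOnNhd.eval_mvPolynomial p).contDiff.contDiffOn.div
      (AnalyticOnNhd.eval_mvPolynomial q).contDiff.contDiffOn fun _ hx => hx).congr hpq
  have hck : ContDiff ℝ k f := contDiff_of_continuous_jet_off hZc hZ hdense k hcont hsm hjet
  have hmul : (fun x => eval x q * f x) = fun x => eval x p :=
    Continuous.ext_on hdense ((continuous_eval q).mul hcont) (continuous_eval p) fun x hx => by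
      simp [hpq x hx, mul_div_cancel₀ _ hx]
  exact ⟨hck, hck, p, q, hq, congrFun hmul⟩
end
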